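/- arXiv:1503.06353 — 9 statements merged into one kernel-verified Lean document; each statement's English description precedes it below -/
import Mathlib

section
/- Let z : ℕ → ℝ satisfy z 1 = 1 and, for every n ≥ 1, z (n+1) = (z n + 2)/(z n + 3). Then for every n ≥ 1, z n = -1 - √3 + 2√3/(1 - (2 - √3)^(2n)). -/
/-!
The fixed points of `x ↦ (x + 2) / (x + 3)` are `α = -1 + √3` and `β = -1 - √3`, and the coordinate
`w = (x - α) / (x - β)` turns this Möbius map into multiplication by `(1 - α) / (1 - β) = (2 - √3) ^ 2`.
Since `w(z 1) = (2 - √3) ^ 2`, we get `w(z n) = (2 - √3) ^ (2 n)`, and solving for `z n` gives the formula.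
-/

open Real

/-- The inverse of the coordinate `w`. -/
noncomputable def ladderParam (t : ℝ) : ℝ := -1 - √3 + 2 * √3 / (1 - t)

lemma one_lt_sqrt_three : 1 < √3 := by
  rw [lt_sqrt zero_le_one]
  norm_num

lemma sqrt_three_lt_two : √3 < 2 := by
  rw [sqrt_lt' two_pos]
  norm_num

lemma ladderParam_step {t : ℝ} (ht : t < 1) :
    (ladderParam t + 2) / (ladderParam t + 3) = ladderParam ((2 - √3) ^ 2 * t) := by
  have hs : √3 ^ 2 = 3 := sq_sqrt (by norm_num)
  have hq : 0 < (2 - √3) ^ 2 := by nlinarith [sqrt_three_lt_two]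
  have hq1 : (2 - √3) ^ 2 < 1 := by nlinarith [sqrt_three_lt_two, one_lt_sqrt_three]
  have hden₁ : 1 - t ≠ 0 := by linarith
  have hden₂ : 1 - (2 - √3) ^ 2 * t ≠ 0 := by nlinarith
  have hden₃ : 2 + √3 - (2 - √3) * t ≠ 0 := by nlinarith [sqrt_three_lt_two, one_lt_sqrt_three]
  have hnum : ladderParam t + 2 = (1 + √3 - (1 - √3) * t) / (1 - t) := by
    unfold ladderParam; field_simp; ring
  have hden : ladderParam t + 3 = (2 + √3 - (2 - √3) * t) / (1 - t) := by
    unfold ladderParam; field_simp; ring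
  have hrhs : ladderParam ((2 - √3) ^ 2 * t) =
      (√3 - 1 + (1 + √3) * (2 - √3) ^ 2 * t) / (1 - (2 - √3) ^ 2 * t) := by
    rw [ladderParam, eq_div_iff hden₂, add_mul, div_mul_cancel₀ _ hden₂]; ring
  rw [hnum, hden, div_div_div_cancel_right₀ hden₁, hrhs, div_eq_div_iff hden₃ hden₂]
  linear_combination (-1 - (√3 ^ 2 - 5) * t - (√3 - 2) ^ 2 * t ^ 2) * hs

lemma ladderParam_two_sub_sqrt_three_sq : ladderParam ((2 - √3) ^ 2) = 1 := by
  have hs : √3 ^ 2 = 3 := sq_sqrt (by norm_num)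
  have hden : 1 - (2 - √3) ^ 2 ≠ 0 := by nlinarith [sqrt_three_lt_two, one_lt_sqrt_three]
  unfold ladderParam
  field_simp
  linear_combination (√3 - 2) * hs

theorem ladder_z_closed_form (z : ℕ → ℝ) (hz1 : z 1 = 1)
    (hrec : ∀ n : ℕ, 1 ≤ n → z (n + 1) = (z n + 2) / (z n + 3)) :
    ∀ n : ℕ, 1 ≤ n →
      z n = -1 - Real.sqrt 3 + 2 * Real.sqrt 3 / (1 - (2 - Real.sqrt 3) ^ (2 * n)) := by
  intro n hn
  change z n = ladderParam ((2 - √3) ^ (2 * n))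
  induction n, hn using Nat.le_induction with
  | base => rw [hz1, ladderParam_two_sub_sqrt_three_sq]
  | succ n hn ih =>
    have hpow : (2 - √3) ^ (2 * n) < 1 :=
      pow_lt_one₀ (by linarith [sqrt_three_lt_two]) (by linarith [one_lt_sqrt_three]) (by omega)
    rw [hrec n hn, ih, ladderParam_step hpow]
    ring_nf
end

section
/- Let z : ℕ → ℝ satisfy z 1 = 1 and z (n+1) = (z n + 2)/(z n + 3) for all n ≥ 1, and let t : ℕ → ℝ satisfy t 1 = -1 and t (n+1) = t n/(z n + 3) for all n ≥ 1. Then for every n ≥ 1, t n = -2√3/((2 + √3)^n - (2 - √3)^n). -/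
theorem ladder_t_closed_form (z t : ℕ → ℝ) (hz1 : z 1 = 1)
    (hzrec : ∀ n : ℕ, 1 ≤ n → z (n + 1) = (z n + 2) / (z n + 3))
    (ht1 : t 1 = -1)
    (htrec : ∀ n : ℕ, 1 ≤ n → t (n + 1) = t n / (z n + 3)) :
    ∀ n : ℕ, 1 ≤ n →
      t n = -2 * Real.sqrt 3 / ((2 + Real.sqrt 3) ^ n - (2 - Real.sqrt 3) ^ n) := by
  set s := Real.sqrt 3 with hsdef
  have hs2 : s ^ 2 = 3 := Real.sq_sqrt (by norm_num)
  have hs_pos : 0 < s := Real.sqrt_pos.mpr (by norm_num)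
  have hs_lt : s < 2 := by nlinarith
  set a : ℝ := 2 + s with hadef
  set b : ℝ := 2 - s with hbdef
  have hab : a * b = 1 := by rw [hadef, hbdef]; nlinarith
  have hsum : a + b = 4 := by rw [hadef, hbdef]; ring
  have hbpos : 0 < b := by rw [hbdef]; linarith
  have hba : b < a := by rw [hadef, hbdef]; linarith
  have hD : ∀ n : ℕ, 1 ≤ n → 0 < a ^ n - b ^ n := by
    intro n hn
    have := pow_lt_pow_left₀ hba hbpos.le (Nat.one_le_iff_ne_zero.mp hn)
    linarith
  have key : ∀ n : ℕ, 1 ≤ n →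
      t n = -2 * s / (a ^ n - b ^ n) ∧
      z n + 3 = (a ^ (n + 1) - b ^ (n + 1)) / (a ^ n - b ^ n) := by
    intro n hn
    induction n, hn using Nat.le_induction with
    | base =>
      have h2s : a - b = 2 * s := by rw [hadef, hbdef]; ring
      constructor
      · rw [ht1]
        rw [pow_one, pow_one, h2s]
        field_simp
      · rw [hz1]
        have e2 : a ^ (1 + 1) - b ^ (1 + 1) = 4 * (2 * s) := by
          have h : a ^ (1 + 1) - b ^ (1 + 1) = (a + b) * (a - b) := by ring
          rw [h, hsum, h2s]
        have e1 : a ^ 1 - b ^ 1 = 2 * s := by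
          rw [pow_one, pow_one, h2s]
        rw [e2, e1]
        field_simp
        norm_num
    | succ n hn ih =>
      obtain ⟨iht, ihz⟩ := ih
      have hDn := hD n hn
      have hDn1 := hD (n + 1) (by omega)
      have hDn0 : a ^ n - b ^ n ≠ 0 := ne_of_gt hDn
      have hDn10 : a ^ (n + 1) - b ^ (n + 1) ≠ 0 := ne_of_gt hDn1
      have hz3 : z n + 3 ≠ 0 := by
        rw [ihz]; positivity
      constructor
      · rw [htrec n hn, iht, ihz, div_div_div_eq]
        rw [div_eq_div_iff (by positivity) hDn10]
        ring
      · rw [hzrec n hn]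
        have ha2 : a ^ 2 = 4 * a - 1 := by linear_combination a * hsum - hab
        have hb2 : b ^ 2 = 4 * b - 1 := by linear_combination b * hsum - hab
        have hrec : a ^ (n + 1 + 1) - b ^ (n + 1 + 1)
            = 4 * (a ^ (n + 1) - b ^ (n + 1)) - (a ^ n - b ^ n) := by
          have e1 : a ^ (n + 1 + 1) = a ^ n * a ^ 2 := by ring
          have e2 : b ^ (n + 1 + 1) = b ^ n * b ^ 2 := by ring
          rw [e1, e2, ha2, hb2, pow_succ a n, pow_succ b n]
          ring
        have hz2 : z n + 2 = (a ^ (n + 1) - b ^ (n + 1)) / (a ^ n - b ^ n) - 1 := by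
          linarith [ihz]
        rw [hrec, hz2, ihz]
        field_simp
        ring
  intro n hn
  exact (key n hn).1
end

section
/- Let x, y, z : ℕ → ℝ satisfy x 1 = 0, y 1 = 1, z 1 = 1, and for every n ≥ 1: z (n+1) = (z n + 2)/(z n + 3), x (n+1) = (x n - y n + z n + 2)(-x n + y n + z n + 4)/(4(z n + 3)) + (x n + y n - z n)/2, and y (n+1) = (-x n + y n + z n + 2)(x n - y n + z n + 4)/(4(z n + 3)) + (x n + y n - z n)/2. Then for every n ≥ 1, x n = (n - 2 - √3)/2 + √3/(1 + (2 - √3)^n) and y n = (n - 2 - √3)/2 + √3/(1 - (2 - √3)^n). -/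
/-!
In the coordinates `s = x + y - z`, `d = x - y` and `z` the recurrence becomes
`z ↦ (z + 2) / (z + 3)`, `d ↦ d / (z + 3)` and, on the invariant hyperbola `d ^ 2 = z ^ 2 + 2 z - 2`,
`s ↦ s + 1`. The rational parametrisation
`z + 1 = √3 (1 + u²) / (1 - u²)`, `d = -2 √3 u / (1 - u²)` of the hyperbola conjugates the pair
`(z, d)` to `u ↦ (2 - √3) u`, starting from `u = 2 - √3`.
-/

open Real

lemma sq_sqrt_three : √3 ^ 2 = 3 := sq_sqrt (by norm_num)

lemma two_sub_sqrt_three_pos : 0 < 2 - √3 := by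
  rw [sub_pos, sqrt_lt' two_pos]
  norm_num

lemma two_sub_sqrt_three_lt_one : 2 - √3 < 1 := by
  have : 1 < √3 := by
    rw [lt_sqrt zero_le_one]
    norm_num
  linarith

lemma two_sub_sqrt_three_ne_zero : 2 - √3 ≠ 0 := two_sub_sqrt_three_pos.ne'

/-- `ladderZ ((2 - √3) ^ n)` and `ladderDiff ((2 - √3) ^ n)` are the closed forms of `z n` and
`x n - y n`. -/
noncomputable def ladderZ (u : ℝ) : ℝ := √3 / (1 + u) + √3 / (1 - u) - 1 - √3

noncomputable def ladderDiff (u : ℝ) : ℝ := √3 / (1 + u) - √3 / (1 - u)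

lemma ladderZ_two_sub_sqrt_three : ladderZ (2 - √3) = 1 := by
  have : 1 + (2 - √3) ≠ 0 := by linarith [two_sub_sqrt_three_pos]
  have : 1 - (2 - √3) ≠ 0 := by linarith [two_sub_sqrt_three_lt_one]
  unfold ladderZ
  field_simp
  linear_combination (√3 - 2) * sq_sqrt_three

lemma ladderDiff_two_sub_sqrt_three : ladderDiff (2 - √3) = -1 := by
  have : 1 + (2 - √3) ≠ 0 := by linarith [two_sub_sqrt_three_pos]
  have : 1 - (2 - √3) ≠ 0 := by linarith [two_sub_sqrt_three_lt_one]
  unfold ladderDiff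
  field_simp
  linear_combination sq_sqrt_three

lemma one_sub_sq_ne_zero {u : ℝ} (hp : 1 + u ≠ 0) (hm : 1 - u ≠ 0) : 1 - u ^ 2 ≠ 0 := by
  rw [show 1 - u ^ 2 = (1 + u) * (1 - u) by ring]
  exact mul_ne_zero hp hm

section

variable {u : ℝ} (hp : 1 + u ≠ 0) (hm : 1 - u ≠ 0)
include hp hm

lemma ladderDiff_sq : ladderDiff u ^ 2 = ladderZ u ^ 2 + 2 * ladderZ u - 2 := by
  unfold ladderDiff ladderZ
  field_simp
  linear_combination (-(1 - u ^ 2) ^ 2) * sq_sqrt_three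

lemma ladderZ_add_three :
    ladderZ u + 3 = (1 - ((2 - √3) * u) ^ 2) / ((2 - √3) * (1 - u ^ 2)) := by
  have := two_sub_sqrt_three_ne_zero
  have := one_sub_sq_ne_zero hp hm
  unfold ladderZ
  field_simp
  linear_combination (u ^ 2 - 1) * sq_sqrt_three

variable (hqp : 1 + (2 - √3) * u ≠ 0) (hqm : 1 - (2 - √3) * u ≠ 0)
include hqp hqm

lemma ladderZ_add_three_ne_zero : ladderZ u + 3 ≠ 0 := by
  rw [ladderZ_add_three hp hm]
  have := two_sub_sqrt_three_ne_zero
  have := one_sub_sq_ne_zero hp hm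
  have := one_sub_sq_ne_zero hqp hqm
  positivity

lemma ladderZ_mul : ladderZ ((2 - √3) * u) = (ladderZ u + 2) / (ladderZ u + 3) := by
  rw [eq_div_iff (ladderZ_add_three_ne_zero hp hm hqp hqm)]
  unfold ladderZ
  field_simp
  linear_combination (1 + (√3 ^ 2 - 5) * u ^ 2 + (√3 - 2) ^ 2 * u ^ 4) * sq_sqrt_three

lemma ladderDiff_mul : ladderDiff ((2 - √3) * u) = ladderDiff u / (ladderZ u + 3) := by
  rw [eq_div_iff (ladderZ_add_three_ne_zero hp hm hqp hqm)]
  unfold ladderDiff ladderZ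
  field_simp
  linear_combination 2 * u * sq_sqrt_three

end

lemma ladder_update_sub (a b z c : ℝ) :
    ((a - b + z + 2) * (-a + b + z + 4) / (4 * (z + 3)) + c)
      - ((-a + b + z + 2) * (a - b + z + 4) / (4 * (z + 3)) + c) = (a - b) / (z + 3) := by
  rw [add_sub_add_right_eq_sub, ← sub_div,
    show (a - b + z + 2) * (-a + b + z + 4) - (-a + b + z + 2) * (a - b + z + 4) = 4 * (a - b) by
      ring,
    mul_div_mul_left _ _ four_ne_zero]

lemma ladder_update_add {a b z : ℝ} (hz : z + 3 ≠ 0) (hab : (a - b) ^ 2 = z ^ 2 + 2 * z - 2) :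
    ((a - b + z + 2) * (-a + b + z + 4) / (4 * (z + 3)) + (a + b - z) / 2)
      + ((-a + b + z + 2) * (a - b + z + 4) / (4 * (z + 3)) + (a + b - z) / 2)
      - (z + 2) / (z + 3) = a + b - z + 1 := by
  field_simp
  linear_combination (-4) * hab

lemma ladder_coordinates_closed_form (x y z : ℕ → ℝ)
    (hx1 : x 1 = 0) (hy1 : y 1 = 1) (hz1 : z 1 = 1)
    (hzrec : ∀ n : ℕ, 1 ≤ n → z (n + 1) = (z n + 2) / (z n + 3))
    (hxrec : ∀ n : ℕ, 1 ≤ n →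
      x (n + 1) = (x n - y n + z n + 2) * (-x n + y n + z n + 4) / (4 * (z n + 3))
          + (x n + y n - z n) / 2)
    (hyrec : ∀ n : ℕ, 1 ≤ n →
      y (n + 1) = (-x n + y n + z n + 2) * (x n - y n + z n + 4) / (4 * (z n + 3))
          + (x n + y n - z n) / 2) (n : ℕ) (hn : 1 ≤ n) :
    z n = ladderZ ((2 - √3) ^ n) ∧ x n - y n = ladderDiff ((2 - √3) ^ n) ∧
      x n + y n - z n = n - 1 := by
  induction n, hn using Nat.le_induction with
  | base =>
    rw [pow_one, ladderZ_two_sub_sqrt_three, ladderDiff_two_sub_sqrt_three, hx1, hy1, hz1]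
    norm_num
  | succ n hn ih =>
    obtain ⟨hz, hd, hs⟩ := ih
    set u := (2 - √3) ^ n
    have hu : 0 < u ∧ u < 1 :=
      ⟨pow_pos two_sub_sqrt_three_pos n, pow_lt_one₀ two_sub_sqrt_three_pos.le
        two_sub_sqrt_three_lt_one (by omega)⟩
    have hqu : 0 < (2 - √3) * u ∧ (2 - √3) * u < 1 :=
      ⟨mul_pos two_sub_sqrt_three_pos hu.1, by nlinarith [two_sub_sqrt_three_lt_one]⟩
    have hp : 1 + u ≠ 0 := by linarith
    have hm : 1 - u ≠ 0 := by linarith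
    have hqp : 1 + (2 - √3) * u ≠ 0 := by linarith
    have hqm : 1 - (2 - √3) * u ≠ 0 := by linarith
    have hz3 : z n + 3 ≠ 0 := hz ▸ ladderZ_add_three_ne_zero hp hm hqp hqm
    rw [pow_succ', hxrec n hn, hyrec n hn, hzrec n hn]
    refine ⟨?_, ?_, ?_⟩
    · rw [ladderZ_mul hp hm hqp hqm, hz]
    · rw [ladder_update_sub, ladderDiff_mul hp hm hqp hqm, hd, hz]
    · rw [ladder_update_add hz3 (by rw [hd, hz]; exact ladderDiff_sq hp hm), hs]
      push_cast
      ring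

theorem ladder_xy_closed_form (x y z : ℕ → ℝ)
    (hx1 : x 1 = 0) (hy1 : y 1 = 1) (hz1 : z 1 = 1)
    (hzrec : ∀ n : ℕ, 1 ≤ n → z (n + 1) = (z n + 2) / (z n + 3))
    (hxrec : ∀ n : ℕ, 1 ≤ n →
      x (n + 1) = (x n - y n + z n + 2) * (-x n + y n + z n + 4) / (4 * (z n + 3))
          + (x n + y n - z n) / 2)
    (hyrec : ∀ n : ℕ, 1 ≤ n →
      y (n + 1) = (-x n + y n + z n + 2) * (x n - y n + z n + 4) / (4 * (z n + 3))
          + (x n + y n - z n) / 2) :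
    ∀ n : ℕ, 1 ≤ n →
      x n = ((n : ℝ) - 2 - Real.sqrt 3) / 2 + Real.sqrt 3 / (1 + (2 - Real.sqrt 3) ^ n) ∧
      y n = ((n : ℝ) - 2 - Real.sqrt 3) / 2 + Real.sqrt 3 / (1 - (2 - Real.sqrt 3) ^ n) := by
  intro n hn
  obtain ⟨hz, hd, hs⟩ :=
    ladder_coordinates_closed_form x y z hx1 hy1 hz1 hzrec hxrec hyrec n hn
  unfold ladderZ at hz
  unfold ladderDiff at hd
  constructor
  · linear_combination (hs + hz + hd) / 2
  · linear_combination (hs + hz - hd) / 2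
end

section
/- Let x, y, z : ℕ → ℝ satisfy x 1 = 0, y 1 = 1, z 1 = 1, and for every n ≥ 1: z (n+1) = (z n + 2)/(z n + 3), x (n+1) = (x n - y n + z n + 2)(-x n + y n + z n + 4)/(4(z n + 3)) + (x n + y n - z n)/2, and y (n+1) = (-x n + y n + z n + 2)(x n - y n + z n + 4)/(4(z n + 3)) + (x n + y n - z n)/2. Then for every n ≥ 1, x n + y n - z n = n - 1. -/
/-!
Write `d = x - y` and `s = x + y - z`. One step of the recurrence divides `d` by `z + 3`, and
this keeps the relation `d ^ 2 = z ^ 2 + 2 * z - 2`, which holds at `n = 1`. In the new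
`x + y` the two products add up to `2 * (z + 2) * (z + 4) - 2 * d ^ 2`, so by that relation the
quadratic terms cancel and `s` grows by exactly `1` at each step.
-/

section LadderStep

variable (x y z : ℝ)

lemma ladder_step_sub (hz : z + 3 ≠ 0) :
    ((x - y + z + 2) * (-x + y + z + 4) / (4 * (z + 3)) + (x + y - z) / 2)
      - ((-x + y + z + 2) * (x - y + z + 4) / (4 * (z + 3)) + (x + y - z) / 2)
      = (x - y) / (z + 3) := by
  field_simp
  ring

lemma ladder_step_add (hz : z + 3 ≠ 0) (hd : (x - y) ^ 2 = z ^ 2 + 2 * z - 2) :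
    ((x - y + z + 2) * (-x + y + z + 4) / (4 * (z + 3)) + (x + y - z) / 2)
      + ((-x + y + z + 2) * (x - y + z + 4) / (4 * (z + 3)) + (x + y - z) / 2)
      - (z + 2) / (z + 3) = (x + y - z) + 1 := by
  field_simp
  linear_combination (-4) * hd

lemma ladder_step_sq_sub (hz : z + 3 ≠ 0) (hd : (x - y) ^ 2 = z ^ 2 + 2 * z - 2) :
    ((x - y) / (z + 3)) ^ 2 = ((z + 2) / (z + 3)) ^ 2 + 2 * ((z + 2) / (z + 3)) - 2 := by
  field_simp
  linear_combination hd

end LadderStep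

lemma pos_of_rec_div (z : ℕ → ℝ) (hz1 : 0 < z 1)
    (hzrec : ∀ n : ℕ, 1 ≤ n → z (n + 1) = (z n + 2) / (z n + 3)) :
    ∀ n : ℕ, 1 ≤ n → 0 < z n := by
  intro n hn
  induction n, hn using Nat.le_induction with
  | base => exact hz1
  | succ n hn ih => rw [hzrec n hn]; positivity

theorem ladder_xyz_sum (x y z : ℕ → ℝ)
    (hx1 : x 1 = 0) (hy1 : y 1 = 1) (hz1 : z 1 = 1)
    (hzrec : ∀ n : ℕ, 1 ≤ n → z (n + 1) = (z n + 2) / (z n + 3))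
    (hxrec : ∀ n : ℕ, 1 ≤ n →
      x (n + 1) = (x n - y n + z n + 2) * (-x n + y n + z n + 4) / (4 * (z n + 3))
          + (x n + y n - z n) / 2)
    (hyrec : ∀ n : ℕ, 1 ≤ n →
      y (n + 1) = (-x n + y n + z n + 2) * (x n - y n + z n + 4) / (4 * (z n + 3))
          + (x n + y n - z n) / 2) :
    ∀ n : ℕ, 1 ≤ n → x n + y n - z n = (n : ℝ) - 1 := by
  have hz3 : ∀ n : ℕ, 1 ≤ n → z n + 3 ≠ 0 := fun n hn =>
    (add_pos (pos_of_rec_div z (by rw [hz1]; norm_num) hzrec n hn) three_pos).ne'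
  have hd : ∀ n : ℕ, 1 ≤ n → (x n - y n) ^ 2 = z n ^ 2 + 2 * z n - 2 := by
    intro n hn
    induction n, hn using Nat.le_induction with
    | base => rw [hx1, hy1, hz1]; norm_num
    | succ n hn ih =>
      rw [hxrec n hn, hyrec n hn, hzrec n hn, ladder_step_sub _ _ _ (hz3 n hn)]
      exact ladder_step_sq_sub _ _ _ (hz3 n hn) ih
  intro n hn
  induction n, hn using Nat.le_induction with
  | base => rw [hx1, hy1, hz1]; norm_num
  | succ n hn ih =>
    rw [hxrec n hn, hyrec n hn, hzrec n hn, ladder_step_add _ _ _ (hz3 n hn) (hd n hn), ih]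
    push_cast
    ring
end

section
/- For every positive integer n, the finite sum over k from 0 to n-1 of 1/(1 + 2·sin²(kπ/(2n))) equals (n/√3)·(2/(1 - (2 - √3)^(2n)) - 1) + 1/3. -/
/-!
Since `1 + 2 sin² (x / 2) = 2 - cos x` and `k ↦ cos (kπ/n)` is symmetric under `k ↦ 2n - k`,
the sum is half the sum of `1 / (2 - cos (2πk/N))` over `k < N = 2n`, corrected by the terms
`k = 0, n`. With `b = 2 - √3` we have `b + b⁻¹ = 4`, and for `z = e^{2πik/N}`,
`4 - (z + z⁻¹) = -(b - z)(b⁻¹ - z) / z`; partial fractions reduce the sum over the `N`-th roots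
of unity to `∑ 1 / (a - ω^k) = N a^(N-1) / (a^N - 1)`, the logarithmic derivative of `X^N - 1`.
-/

open Real

open Polynomial in
theorem IsPrimitiveRoot.sum_one_div_sub_pow {K : Type*} [Field K] {ω : K} {N : ℕ}
    (hω : IsPrimitiveRoot ω N) {a : K} (ha : a ^ N ≠ 1) :
    ∑ k ∈ Finset.range N, 1 / (a - ω ^ k) = N * a ^ (N - 1) / (a ^ N - 1) := by
  have hroots : (X ^ N - C (1 : K)).roots = (Multiset.range N).map (ω ^ ·) := by
    rw [← nthRoots, hω.nthRoots_eq (one_pow N)]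
    simp
  have h := (X_pow_sub_one_splits hω).eval_derivative_div_eval_of_ne_zero
    (x := a) (by simpa [sub_eq_zero] using ha)
  rw [hroots] at h
  simpa [Finset.sum, eq_comm, derivative_X_pow] using h

theorem IsPrimitiveRoot.sum_one_div_add_inv_sub_pow_add_inv {K : Type*} [Field K] {ω : K}
    {N : ℕ} (hω : IsPrimitiveRoot ω N) {b : K} (hb : b ≠ 0) (hb2 : b ^ 2 ≠ 1)
    (hbN : b ^ N ≠ 1) :
    ∑ k ∈ Finset.range N, 1 / (b + b⁻¹ - (ω ^ k + (ω ^ k)⁻¹))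
      = N / (b⁻¹ - b) * ((1 + b ^ N) / (1 - b ^ N)) := by
  have hN : N ≠ 0 := by rintro rfl; exact hbN (pow_zero b)
  have hbinvN : b⁻¹ ^ N ≠ 1 := by simpa [inv_pow] using hbN
  have hbb : b⁻¹ - b ≠ 0 := by
    intro h
    apply hb2
    field_simp at h
    linear_combination -h
  have hpartial : ∀ k ∈ Finset.range N, 1 / (b + b⁻¹ - (ω ^ k + (ω ^ k)⁻¹))
      = (b⁻¹ * (1 / (b⁻¹ - ω ^ k)) - b * (1 / (b - ω ^ k))) / (b⁻¹ - b) := by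
    intro k _
    have hz : (ω ^ k) ^ N = 1 := by rw [← pow_mul, mul_comm, pow_mul, hω.pow_eq_one, one_pow]
    have hz0 : ω ^ k ≠ 0 := by rintro h; simp [h, hN] at hz
    have hzb : b - ω ^ k ≠ 0 := by rw [sub_ne_zero]; rintro rfl; exact hbN hz
    have hzb' : b⁻¹ - ω ^ k ≠ 0 := by
      rw [sub_ne_zero]; rintro h; rw [h] at hbinvN; exact hbinvN hz
    have hfactor : b + b⁻¹ - (ω ^ k + (ω ^ k)⁻¹)
        = -((b - ω ^ k) * (b⁻¹ - ω ^ k) * (ω ^ k)⁻¹) := by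
      field_simp
      ring
    rw [hfactor]
    generalize b⁻¹ = c at *
    field_simp
    ring
  have hmul_pow_pred :
      ∀ c : K, c * (N * c ^ (N - 1) / (c ^ N - 1)) = N * c ^ N / (c ^ N - 1) := by
    intro c
    rw [← pow_sub_one_mul hN c]
    ring
  have hsub_one : b ^ N - 1 ≠ 0 := sub_ne_zero.mpr hbN
  have hone_sub : 1 - b ^ N ≠ 0 := sub_ne_zero.mpr hbN.symm
  rw [Finset.sum_congr rfl hpartial, ← Finset.sum_div, Finset.sum_sub_distrib, ← Finset.mul_sum,
    ← Finset.mul_sum, hω.sum_one_div_sub_pow hbN, hω.sum_one_div_sub_pow hbinvN, hmul_pow_pred,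
    hmul_pow_pred, inv_pow]
  field_simp
  ring

theorem Complex.exp_two_pi_mul_I_div_pow_add_inv (N k : ℕ) :
    Complex.exp (2 * π * Complex.I / N) ^ k + (Complex.exp (2 * π * Complex.I / N) ^ k)⁻¹
      = ((2 * Real.cos (2 * π * k / N) : ℝ) : ℂ) := by
  rw [← Complex.exp_nat_mul, ← Complex.exp_neg]
  push_cast
  rw [Complex.two_cos]
  ring_nf

theorem sum_one_div_add_inv_sub_two_mul_cos {b : ℝ} {N : ℕ} (hb : b ≠ 0) (hb2 : b ^ 2 ≠ 1)
    (hbN : b ^ N ≠ 1) :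
    ∑ k ∈ Finset.range N, 1 / (b + b⁻¹ - 2 * Real.cos (2 * π * k / N))
      = N / (b⁻¹ - b) * ((1 + b ^ N) / (1 - b ^ N)) := by
  have hN : N ≠ 0 := by rintro rfl; exact hbN (pow_zero b)
  have h := (Complex.isPrimitiveRoot_exp N hN).sum_one_div_add_inv_sub_pow_add_inv
    (b := b) (by exact_mod_cast hb) (by exact_mod_cast hb2) (by exact_mod_cast hbN)
  simp_rw [Complex.exp_two_pi_mul_I_div_pow_add_inv] at h
  exact_mod_cast h

theorem inv_two_sub_sqrt_three : (2 - √3)⁻¹ = 2 + √3 := by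
  rw [inv_eq_of_mul_eq_one_right]
  linear_combination -Real.sq_sqrt (show (0 : ℝ) ≤ 3 by norm_num)

theorem sum_one_div_two_sub_cos {N : ℕ} (hN : N ≠ 0) :
    ∑ k ∈ Finset.range N, 1 / (2 - Real.cos (2 * π * k / N))
      = N / √3 * (2 / (1 - (2 - √3) ^ N) - 1) := by
  have hs : √3 ^ 2 = 3 := Real.sq_sqrt (by norm_num)
  have hs1 : 1 < √3 := by nlinarith [Real.sqrt_nonneg 3]
  have hs2 : √3 < 2 := by nlinarith [Real.sqrt_nonneg 3]
  have hq : (2 - √3) ^ N < 1 := pow_lt_one₀ (by linarith) (by linarith) hN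
  have h := sum_one_div_add_inv_sub_two_mul_cos (b := 2 - √3) (by linarith) (by nlinarith) hq.ne
  have hterm : ∀ k ∈ Finset.range N, 1 / (2 - Real.cos (2 * π * k / N))
      = 2 * (1 / (2 - √3 + (2 - √3)⁻¹ - 2 * Real.cos (2 * π * k / N))) := by
    intro k _
    generalize Real.cos (2 * π * k / N) = c
    rw [inv_two_sub_sqrt_three, show 2 - √3 + (2 + √3) - 2 * c = (2 - c) * 2 by ring, ← div_div]
    ring
  have h1q : 1 - (2 - √3) ^ N ≠ 0 := by linarith
  rw [Finset.sum_congr rfl hterm, ← Finset.mul_sum, h, inv_two_sub_sqrt_three]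
  field_simp
  ring

theorem one_add_two_mul_sin_sq_half (x : ℝ) :
    1 + 2 * Real.sin (x / 2) ^ 2 = 2 - Real.cos x := by
  rw [sin_sq_eq_half_sub, mul_div_cancel₀ x two_ne_zero]
  ring

theorem Finset.sum_range_two_mul_of_symm {M : Type*} [AddCommGroup M] (h : ℕ → M) (n : ℕ)
    (hh : ∀ k ≤ n, h (2 * n - k) = h k) :
    ∑ k ∈ Finset.range (2 * n), h k = 2 • ∑ k ∈ Finset.range n, h k + h n - h 0 := by
  have hupper : ∑ k ∈ Finset.range n, h (n + k) = ∑ k ∈ Finset.range n, h (k + 1) := by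
    rw [← Finset.sum_range_reflect]
    refine Finset.sum_congr rfl fun k hk => ?_
    rw [Finset.mem_range] at hk
    rw [← hh (k + 1) (by omega)]
    congr 1
    omega
  rw [two_mul, Finset.sum_range_add, hupper, eq_sub_of_add_eq (Finset.sum_range_succ' h n).symm,
    Finset.sum_range_succ]
  abel

theorem sum_range_two_mul_comp_cos (g : ℝ → ℝ) {n : ℕ} (hn : n ≠ 0) :
    ∑ k ∈ Finset.range (2 * n), g (Real.cos (k * π / n))
      = 2 * ∑ k ∈ Finset.range n, g (Real.cos (k * π / n)) + g (-1) - g 1 := by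
  have hn' : (n : ℝ) ≠ 0 := Nat.cast_ne_zero.mpr hn
  rw [Finset.sum_range_two_mul_of_symm _ n fun k hk => ?_, nsmul_eq_mul]
  · simp [mul_div_cancel_left₀ π hn']
  · rw [Nat.cast_sub (by omega), show ((2 * n : ℕ) - k : ℝ) * π / n = 2 * π - k * π / n by
      push_cast; field_simp, cos_two_pi_sub]

theorem trig_sum_closed_form (n : ℕ) (hn : 0 < n) :
    ∑ k ∈ Finset.range n, 1 / (1 + 2 * Real.sin ((k : ℝ) * π / (2 * n)) ^ 2)
      = ((n : ℝ) / Real.sqrt 3) * (2 / (1 - (2 - Real.sqrt 3) ^ (2 * n)) - 1) + 1 / 3 := by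
  have hhalf : ∀ k : ℕ, (k : ℝ) * π / (2 * n) = k * π / n / 2 := fun k => by ring
  have hangle : ∀ k : ℕ, 2 * π * k / ((2 * n : ℕ) : ℝ) = k * π / n := fun k => by
    push_cast
    field_simp
  have hfull := sum_one_div_two_sub_cos (N := 2 * n) (by omega)
  have hsymm := sum_range_two_mul_comp_cos (fun x => 1 / (2 - x)) hn.ne'
  simp only [hangle] at hfull
  simp only [hhalf, one_add_two_mul_sin_sq_half]
  push_cast at hfull
  linear_combination (hsymm.symm.trans hfull) / 2
end

section
/- For every positive integer n, the finite sum over k from 1 to n-1 of 1/sin²(kπ/(2n)) equals 2(n² - 1)/3. -/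
/-!
By de Moivre, `Im (cot θ + i) ^ (2n) = sin (2nθ) / sin θ ^ (2n)`, while the binomial theorem gives
`Im (t + i) ^ (2n) = t * P (t ^ 2)` for a real polynomial `P` of degree `n - 1` with leading
coefficient `2n` and next coefficient `-C(2n, 3)`. Hence the `n - 1` distinct numbers
`cot² (kπ / 2n)`, `0 < k < n`, are exactly the roots of `P`, and Vieta's formula gives
`∑ cot² (kπ / 2n) = C(2n, 3) / 2n = (2n - 1)(n - 1) / 3`. Adding `1` to each term turns `cot²`
into `1 / sin²`, and `(n - 1) + (2n - 1)(n - 1) / 3 = 2 (n² - 1) / 3`.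
-/

open Real Polynomial Finset

theorem Finset.sum_range_two_mul {M : Type*} [AddCommMonoid M] (f : ℕ → M) (n : ℕ) :
    ∑ j ∈ range (2 * n), f j = ∑ l ∈ range n, (f (2 * l) + f (2 * l + 1)) := by
  induction n with
  | zero => simp
  | succ n ih => rw [mul_add_one, sum_range_succ, sum_range_succ, sum_range_succ, ih, add_assoc]

theorem Nat.cast_choose_three {K : Type*} [Field K] [CharZero K] (a : ℕ) :
    (a.choose 3 : K) = a * (a - 1) * (a - 2) / 6 := by
  rw [eq_div_iff (by norm_num), ← show ((Nat.factorial 3 : ℕ) : K) = 6 by norm_num [Nat.factorial],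
    ← Nat.cast_mul, mul_comm, ← Nat.descFactorial_eq_factorial_mul_choose, Nat.cast_descFactorial]
  rcases a with _ | _ | a
  · simp
  · simp
  · simp [ascPochhammer_succ_eval]; ring

namespace Polynomial

theorem nextCoeff_eq_neg_leadingCoeff_mul_sum {R ι : Type*} [CommRing R] [IsDomain R]
    {p : R[X]} {s : Finset ι} {v : ι → R} (hv : Set.InjOn v s) (hroot : ∀ i ∈ s, p.IsRoot (v i))
    (hcard : #s = p.natDegree) : p.nextCoeff = -p.leadingCoeff * ∑ i ∈ s, v i := by
  rcases eq_or_ne p 0 with rfl | hp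
  · simp [nextCoeff]
  have hle : s.val.map v ≤ p.roots :=
    (Multiset.le_iff_subset (nodup_map_iff_injOn.2 hv)).2 fun x hx => by
      obtain ⟨i, hi, rfl⟩ := Multiset.mem_map.1 hx
      exact (mem_roots hp).2 (hroot i hi)
  have hroots : s.val.map v = p.roots :=
    Multiset.eq_of_le_of_card_le hle (by simpa [hcard] using card_roots' p)
  have hsplit : p.Splits := splits_iff_card_roots.2 (by simpa [← hroots] using hcard)
  rw [hsplit.nextCoeff_eq_neg_sum_roots_mul_leadingCoeff, ← hroots]
  rfl

end Polynomial

theorem im_ofReal_cot_add_I_pow (m : ℕ) {θ : ℝ} (hθ : sin θ ≠ 0) :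
    ((((cot θ : ℝ) : ℂ) + Complex.I) ^ m).im = sin (m * θ) / sin θ ^ m := by
  have hcot : ((cot θ : ℝ) : ℂ) + Complex.I =
      (Complex.cos θ + Complex.sin θ * Complex.I) / (sin θ : ℝ) := by
    have hsin : Complex.sin θ ≠ 0 := by exact_mod_cast hθ
    rw [cot_eq_cos_div_sin]
    push_cast
    field_simp
  rw [hcot, div_pow, Complex.cos_add_sin_mul_I_pow, ← Complex.ofReal_pow, Complex.div_ofReal_im]
  simp [← Complex.ofReal_natCast, ← Complex.ofReal_mul, ← Complex.ofReal_sin, ← Complex.ofReal_cos]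

theorem Real.one_div_sin_sq_eq_one_add_cot_sq {x : ℝ} (hx : sin x ≠ 0) :
    1 / sin x ^ 2 = 1 + cot x ^ 2 := by
  rw [cot_eq_cos_div_sin]
  field_simp
  linarith [sin_sq_add_cos_sq x]

theorem Real.strictAntiOn_cot_sq : StrictAntiOn (fun x => cot x ^ 2) (Set.Ioo 0 (π / 2)) := by
  intro a ha b hb hab
  have hsa : 0 < sin a := sin_pos_of_pos_of_lt_pi ha.1 (by linarith [ha.2, pi_pos])
  have hsab : sin a < sin b :=
    sin_lt_sin_of_lt_of_le_pi_div_two (by linarith [ha.1, pi_pos]) hb.2.le hab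
  have hcsc : 1 / sin b ^ 2 < 1 / sin a ^ 2 := one_div_lt_one_div_of_lt (by positivity) (by gcongr)
  show cot b ^ 2 < cot a ^ 2
  linarith [one_div_sin_sq_eq_one_add_cot_sq hsa.ne',
    one_div_sin_sq_eq_one_add_cot_sq (hsa.trans hsab).ne']

noncomputable def cotSqPoly (n : ℕ) : ℝ[X] :=
  ∑ l ∈ range n, C ((-1) ^ (n - 1 - l) * ((2 * n).choose (2 * l + 1) : ℝ)) * X ^ l

theorem im_ofReal_add_I_pow_two_mul (n : ℕ) (t : ℝ) :
    (((t : ℂ) + Complex.I) ^ (2 * n)).im = t * (cotSqPoly n).eval (t ^ 2) := by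
  simp only [add_pow, sum_range_succ _ (2 * n), sum_range_two_mul, Complex.add_im, Complex.im_sum,
    cotSqPoly, eval_finsetSum, eval_mul, eval_C, eval_pow, eval_X, mul_sum]
  rw [Nat.sub_self, pow_zero, mul_one, Nat.choose_self, Nat.cast_one, mul_one, ← Complex.ofReal_pow,
    Complex.ofReal_im, add_zero]
  refine sum_congr rfl fun l hl => ?_
  have hl : l < n := mem_range.1 hl
  have heven : Complex.I ^ (2 * n - 2 * l) = ((-1) ^ (n - l) : ℝ) := by
    rw [show 2 * n - 2 * l = 2 * (n - l) by omega, pow_mul, Complex.I_sq]; push_cast; rfl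
  have hodd : Complex.I ^ (2 * n - (2 * l + 1)) = ((-1) ^ (n - 1 - l) : ℝ) * Complex.I := by
    rw [show 2 * n - (2 * l + 1) = 2 * (n - 1 - l) + 1 by omega, pow_succ, pow_mul, Complex.I_sq]
    push_cast; rfl
  rw [heven, hodd]
  simp only [← Complex.ofReal_pow, Complex.mul_im, Complex.mul_re, Complex.ofReal_re,
    Complex.ofReal_im, Complex.natCast_re, Complex.natCast_im, Complex.I_re, Complex.I_im, mul_zero,
    zero_mul, mul_one, sub_zero, sub_self, add_zero, zero_add]
  ring

section

variable {n : ℕ}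

theorem coeff_cotSqPoly (j : ℕ) : (cotSqPoly n).coeff j =
    if j < n then (-1) ^ (n - 1 - j) * ((2 * n).choose (2 * j + 1) : ℝ) else 0 := by
  simp only [cotSqPoly, finsetSum_coeff, coeff_C_mul, coeff_X_pow, mul_ite, mul_one, mul_zero,
    sum_ite_eq, mem_range]

theorem coeff_cotSqPoly_pred (hn : 0 < n) : (cotSqPoly n).coeff (n - 1) = 2 * n := by
  rw [coeff_cotSqPoly, if_pos (by omega), Nat.sub_self, show 2 * (n - 1) + 1 = 2 * n - 1 by omega,
    Nat.choose_symm (by omega), Nat.choose_one_right]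
  simp

theorem natDegree_cotSqPoly (hn : 0 < n) : (cotSqPoly n).natDegree = n - 1 := by
  refine natDegree_eq_of_le_of_coeff_ne_zero ?_ (by rw [coeff_cotSqPoly_pred hn]; positivity)
  exact natDegree_le_iff_coeff_eq_zero.2 fun j hj => by rw [coeff_cotSqPoly, if_neg (by omega)]

theorem leadingCoeff_cotSqPoly (hn : 0 < n) : (cotSqPoly n).leadingCoeff = 2 * n := by
  rw [leadingCoeff, natDegree_cotSqPoly hn, coeff_cotSqPoly_pred hn]

theorem nextCoeff_cotSqPoly (hn : 0 < n) : (cotSqPoly n).nextCoeff = -(2 * n).choose 3 := by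
  rw [nextCoeff, natDegree_cotSqPoly hn]
  split_ifs with h
  · simp [show n = 1 by omega]
  · rw [coeff_cotSqPoly, if_pos (by omega), show n - 1 - (n - 1 - 1) = 1 by omega,
      show 2 * (n - 1 - 1) + 1 = 2 * n - 3 by omega, Nat.choose_symm (by omega)]
    ring

theorem isRoot_cotSqPoly_cot_sq {θ : ℝ} (hsin : sin θ ≠ 0) (hcos : cos θ ≠ 0)
    (h : sin (2 * n * θ) = 0) : (cotSqPoly n).IsRoot (cot θ ^ 2) := by
  have him := im_ofReal_add_I_pow_two_mul n (cot θ)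
  rw [im_ofReal_cot_add_I_pow _ hsin, Nat.cast_mul, Nat.cast_two, h, zero_div, eq_comm,
    mul_eq_zero] at him
  exact him.resolve_left (by rw [cot_eq_cos_div_sin]; exact div_ne_zero hcos hsin)

theorem mul_pi_div_two_mul_mem_Ioo {k : ℕ} (hk : k ∈ Ico 1 n) :
    (k : ℝ) * π / (2 * n) ∈ Set.Ioo 0 (π / 2) := by
  obtain ⟨hk1, hkn⟩ := mem_Ico.1 hk
  have hk0 : (0 : ℝ) < k := by exact_mod_cast hk1
  have hkn' : (k : ℝ) < n := by exact_mod_cast hkn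
  have hn0 : (0 : ℝ) < n := hk0.trans hkn'
  constructor
  · positivity
  · rw [div_lt_div_iff₀ (by positivity) two_pos]
    nlinarith [pi_pos]

theorem sum_cot_sq_mul_pi_div_two_mul (hn : 0 < n) :
    ∑ k ∈ Ico 1 n, cot (k * π / (2 * n)) ^ 2 = (2 * n - 1) * (n - 1) / 3 := by
  have hn' : (n : ℝ) ≠ 0 := by positivity
  have hroot : ∀ k ∈ Ico 1 n, (cotSqPoly n).IsRoot (cot (k * π / (2 * n)) ^ 2) := fun k hk => by
    obtain ⟨h0, hπ2⟩ := mul_pi_div_two_mul_mem_Ioo hk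
    refine isRoot_cotSqPoly_cot_sq (sin_pos_of_pos_of_lt_pi h0 (by linarith [pi_pos])).ne'
      (cos_pos_of_mem_Ioo ⟨by linarith, hπ2⟩).ne' ?_
    rw [show 2 * n * (k * π / (2 * n)) = k * π by field_simp]
    exact sin_nat_mul_pi k
  have hinj : Set.InjOn (fun k : ℕ => cot (k * π / (2 * n)) ^ 2) (Ico 1 n) := by
    refine (strictAntiOn_cot_sq.comp_strictMonoOn (fun a _ b _ hab => ?_)
      fun k hk => mul_pi_div_two_mul_mem_Ioo hk).injOn
    have hab' : (a : ℝ) < b := by exact_mod_cast hab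
    gcongr
  have hvieta := nextCoeff_eq_neg_leadingCoeff_mul_sum hinj hroot
    (by rw [Nat.card_Ico, natDegree_cotSqPoly hn])
  rw [nextCoeff_cotSqPoly hn, leadingCoeff_cotSqPoly hn, Nat.cast_choose_three] at hvieta
  push_cast at hvieta
  field_simp at hvieta
  linear_combination hvieta / 6

end

theorem csc_squared_sum (n : ℕ) (hn : 0 < n) :
    ∑ k ∈ Finset.Ico 1 n, 1 / Real.sin ((k : ℝ) * π / (2 * n)) ^ 2
      = 2 * ((n : ℝ) ^ 2 - 1) / 3 := by
  have hsin : ∀ k ∈ Ico 1 n, sin ((k : ℝ) * π / (2 * n)) ≠ 0 := fun k hk =>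
    have ⟨h0, hπ2⟩ := mul_pi_div_two_mul_mem_Ioo hk
    (sin_pos_of_pos_of_lt_pi h0 (by linarith [pi_pos])).ne'
  rw [sum_congr rfl fun k hk => one_div_sin_sq_eq_one_add_cot_sq (hsin k hk), sum_add_distrib,
    sum_cot_sq_mul_pi_div_two_mul hn, sum_const, Nat.card_Ico, nsmul_eq_mul, Nat.cast_sub hn]
  push_cast
  ring
end

section
/- Let G : ℕ → ℝ satisfy G 0 = 0, G 1 = 1 and G (n+2) = 4·G (n+1) - G n for all n ≥ 0. Then for every positive integer n, the finite sum over k from 0 to n-1 of 1/(1 + 2·sin²(kπ/(2n))) equals 1/3 + n·G (2n)/(6·(G n)²). -/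
/-!
Since `1 + 2 sin² (θ / 2) = 2 - cos θ`, the sum is a half-period sum of `(a - cos θ)⁻¹` with
`a = 2 = (α + α⁻¹) / 2`, `α = 2 + √3`. Over a full period, i.e. over the `2n`-th roots of unity `z`,
`(a - (z + z⁻¹) / 2)⁻¹` splits into partial fractions `(α - z)⁻¹` and `(α⁻¹ - z)⁻¹`, whose sums are
logarithmic derivatives of `z ^ (2n) - 1` at `α` and `α⁻¹`. The symmetry `θ ↦ 2π - θ` folds the
full period onto the half period, and Binet's formula `G m = (α ^ m - α⁻¹ ^ m) / (α - α⁻¹)`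
turns the result into the stated closed form.
-/

open Real Finset

open Polynomial in
theorem IsPrimitiveRoot.sum_inv_sub_pow {𝕜 : Type*} [NontriviallyNormedField 𝕜] {ζ : 𝕜} {N : ℕ}
    (hζ : IsPrimitiveRoot ζ N) {c : 𝕜} (hc : c ^ N ≠ 1) :
    ∑ k ∈ range N, (c - ζ ^ k)⁻¹ = N * c ^ (N - 1) / (c ^ N - 1) := by
  have hN : 0 < N := Nat.pos_of_ne_zero (by rintro rfl; simp at hc)
  have hprod : (fun z => ∏ k ∈ range N, (z - ζ ^ k)) = fun z => z ^ N - 1 := by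
    funext z
    simpa [eval_prod] using congrArg (eval z) (X_pow_sub_C_eq_prod hζ hN (one_pow N)).symm
  have hne : ∀ k ∈ range N, c - ζ ^ k ≠ 0 := by
    intro k _ h
    apply hc
    rw [sub_eq_zero.mp h, ← pow_mul, mul_comm, pow_mul, hζ.pow_eq_one, one_pow]
  calc ∑ k ∈ range N, (c - ζ ^ k)⁻¹ = ∑ k ∈ range N, logDeriv (fun z => z - ζ ^ k) c := by
        simp [logDeriv_apply]
    _ = logDeriv (fun z => ∏ k ∈ range N, (z - ζ ^ k)) c :=
        (logDeriv_prod hne (fun _ _ => by fun_prop)).symm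
    _ = N * c ^ (N - 1) / (c ^ N - 1) := by simp [hprod, logDeriv_apply]

theorem inv_add_inv_sub_add_inv {K : Type*} [Field K] {α z : K} (hα : α ≠ 0)
    (hz : z ≠ 0) (hα2 : α ^ 2 ≠ 1) (hzα : z ≠ α) (hzα' : z ≠ α⁻¹) :
    ((α + α⁻¹) - (z + z⁻¹))⁻¹ = (α - α⁻¹)⁻¹ * (α * (α - z)⁻¹ - α⁻¹ * (α⁻¹ - z)⁻¹) := by
  have h1 : α - α⁻¹ ≠ 0 := by
    contrapose! hα2; field_simp at hα2; linear_combination hα2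
  have h2 : α - z ≠ 0 := sub_ne_zero.mpr hzα.symm
  have h3 : 1 - α * z ≠ 0 := by
    contrapose! hzα'; field_simp; linear_combination -hzα'
  refine inv_eq_of_mul_eq_one_right ?_
  field_simp
  ring

theorem Complex.sum_range_inv_sub_cos_two_pi_mul_div {α : ℂ} {N : ℕ} (hα0 : α ≠ 0)
    (hα2 : α ^ 2 ≠ 1) (hα : α ^ N ≠ 1) :
    ∑ k ∈ range N, ((α + α⁻¹) / 2 - Complex.cos (2 * π * k / N))⁻¹
      = 2 * N * (α ^ N + 1) / ((α - α⁻¹) * (α ^ N - 1)) := by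
  have hN : N ≠ 0 := by rintro rfl; simp at hα
  have hmul (c : ℂ) : c * (N * c ^ (N - 1) / (c ^ N - 1)) = N * c ^ N / (c ^ N - 1) := by
    rw [mul_div_assoc', mul_left_comm, mul_pow_sub_one hN]
  have hα' : α⁻¹ ^ N ≠ 1 := by rwa [inv_pow, inv_ne_one]
  set ζ := Complex.exp (2 * π * Complex.I / N)
  have hζ : IsPrimitiveRoot ζ N := Complex.isPrimitiveRoot_exp N hN
  have hterm : ∀ k ∈ range N, ((α + α⁻¹) / 2 - Complex.cos (2 * π * k / N))⁻¹
      = 2 * ((α - α⁻¹)⁻¹ * (α * (α - ζ ^ k)⁻¹ - α⁻¹ * (α⁻¹ - ζ ^ k)⁻¹)) := by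
    intro k _
    have hζk : ζ ^ k = Complex.exp (2 * π * k / N * Complex.I) := by
      rw [← Complex.exp_nat_mul]; ring_nf
    have hcos : Complex.cos (2 * π * k / N) = (ζ ^ k + (ζ ^ k)⁻¹) / 2 := by
      rw [Complex.cos, hζk, ← Complex.exp_neg, neg_mul]
    have hne : ∀ c : ℂ, c ^ N ≠ 1 → ζ ^ k ≠ c := fun c hc h => by
      rw [← h, ← pow_mul, mul_comm, pow_mul, hζ.pow_eq_one, one_pow] at hc
      exact hc rfl
    rw [hcos, ← sub_div, inv_div, div_eq_mul_inv,
      inv_add_inv_sub_add_inv hα0 (pow_ne_zero k (hζ.ne_zero hN)) hα2 (hne α hα) (hne _ hα')]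
  rw [sum_congr rfl hterm, ← mul_sum, ← mul_sum, sum_sub_distrib, ← mul_sum, ← mul_sum,
    hζ.sum_inv_sub_pow hα, hζ.sum_inv_sub_pow hα', hmul, hmul, inv_pow]
  have h1 : α ^ N - 1 ≠ 0 := sub_ne_zero.mpr hα
  have h2 : α - α⁻¹ ≠ 0 := by
    contrapose! hα2; field_simp at hα2; linear_combination hα2
  have h3 : 1 - α ^ N ≠ 0 := sub_ne_zero.mpr (Ne.symm hα)
  field_simp
  ring

theorem Real.sum_range_inv_sub_cos_two_pi_mul_div {α : ℝ} {N : ℕ} (hα0 : α ≠ 0)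
    (hα2 : α ^ 2 ≠ 1) (hα : α ^ N ≠ 1) :
    ∑ k ∈ range N, ((α + α⁻¹) / 2 - cos (2 * π * k / N))⁻¹
      = 2 * N * (α ^ N + 1) / ((α - α⁻¹) * (α ^ N - 1)) := by
  exact_mod_cast Complex.sum_range_inv_sub_cos_two_pi_mul_div (α := α) (N := N)
    (by exact_mod_cast hα0) (by exact_mod_cast hα2) (by exact_mod_cast hα)

theorem Finset.sum_range_two_mul_add_of_symm {M : Type*} [AddCommMonoid M] (g : ℕ → M) (n : ℕ)
    (hg : ∀ k ≤ 2 * n, g (2 * n - k) = g k) :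
    ∑ k ∈ range (2 * n), g k + g 0 = ∑ k ∈ range n, g k + ∑ k ∈ range n, g k + g n := by
  have hreflect : ∑ k ∈ range n, g (n + k) = ∑ k ∈ range n, g (k + 1) := by
    rw [← sum_range_reflect]
    refine sum_congr rfl fun k hk => ?_
    rw [mem_range] at hk
    rw [← hg (k + 1) (by omega)]
    congr 1
    omega
  rw [two_mul, sum_range_add, hreflect, add_assoc, ← sum_range_succ', sum_range_succ, add_assoc]

theorem Real.sum_range_two_mul_comp_cos_mul_pi_div {M : Type*} [AddCommMonoid M] (f : ℝ → M)
    {n : ℕ} (hn : n ≠ 0) :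
    ∑ k ∈ range (2 * n), f (cos (k * π / n)) + f 1
      = ∑ k ∈ range n, f (cos (k * π / n)) + ∑ k ∈ range n, f (cos (k * π / n)) + f (-1) := by
  have hsymm (k : ℕ) (hk : k ≤ 2 * n) :
      cos (((2 * n - k : ℕ) : ℝ) * π / n) = cos (k * π / n) := by
    rw [Nat.cast_sub hk, ← cos_two_pi_sub]
    congr 1
    field_simp
    push_cast
    ring
  have hnπ : (n : ℝ) * π / n = π := by field_simp
  simpa only [Nat.cast_zero, zero_mul, zero_div, cos_zero, hnπ, cos_pi] using
    sum_range_two_mul_add_of_symm (fun k => f (cos (k * π / n))) n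
      (fun k hk => by rw [hsymm k hk])

theorem Real.sum_range_inv_sub_cos_mul_pi_div {α : ℝ} (hα : 1 < α) {n : ℕ} (hn : 0 < n) :
    ∑ k ∈ range n, ((α + α⁻¹) / 2 - cos (k * π / n))⁻¹
      = 2 * n * (α ^ n + α⁻¹ ^ n) / ((α - α⁻¹) * (α ^ n - α⁻¹ ^ n)) + 4 / (α - α⁻¹) ^ 2 := by
  have hα0 : α ≠ 0 := by positivity
  have hsym := sum_range_two_mul_comp_cos_mul_pi_div (fun y => ((α + α⁻¹) / 2 - y)⁻¹) hn.ne'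
  have hfull := sum_range_inv_sub_cos_two_pi_mul_div hα0 (one_lt_pow₀ hα two_ne_zero).ne'
    (one_lt_pow₀ hα (by positivity : 2 * n ≠ 0)).ne'
  have hangle (k : ℕ) : 2 * π * k / ((2 * n : ℕ) : ℝ) = k * π / n := by
    push_cast; field_simp
  simp only [hangle] at hfull
  simp only [hfull, pow_mul'] at hsym
  have hends : ((α + α⁻¹) / 2 - 1)⁻¹ - ((α + α⁻¹) / 2 - -1)⁻¹ = 8 / (α - α⁻¹) ^ 2 := by
    have e1 : (α + α⁻¹) / 2 - 1 = (α - 1) ^ 2 / (2 * α) := by field_simp; ring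
    have e2 : (α + α⁻¹) / 2 - -1 = (α + 1) ^ 2 / (2 * α) := by field_simp; ring
    have h1 : α - 1 ≠ 0 := by linarith
    have h2 : α + 1 ≠ 0 := by linarith
    have h3 : α ^ 2 - 1 ≠ 0 := by nlinarith
    rw [e1, e2, inv_div, inv_div]
    field_simp
    ring
  rw [inv_pow]
  have hx : 1 < α ^ n := one_lt_pow₀ hα hn.ne'
  generalize α ^ n = x at hx hsym ⊢
  generalize ∑ k ∈ range n, ((α + α⁻¹) / 2 - cos (k * π / n))⁻¹ = S at hsym ⊢
  have hS : S = 2 * n * (x ^ 2 + 1) / ((α - α⁻¹) * (x ^ 2 - 1)) + 4 / (α - α⁻¹) ^ 2 := by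
    push_cast at hsym
    linear_combination (hends - hsym) / 2
  rw [hS]
  have hx0 : x ≠ 0 := by positivity
  have hx1 : x ^ 2 - 1 ≠ 0 := by nlinarith
  field_simp

theorem eq_pow_sub_pow_div_of_recurrence {K : Type*} [Field K] {G : ℕ → K} {r s : K}
    (hrs : r ≠ s) (h0 : G 0 = 0) (h1 : G 1 = 1)
    (hrec : ∀ n, G (n + 2) = (r + s) * G (n + 1) - r * s * G n) (n : ℕ) :
    G n = (r ^ n - s ^ n) / (r - s) := by
  have hrs' : r - s ≠ 0 := sub_ne_zero.mpr hrs
  induction n using Nat.twoStepInduction with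
  | zero => simp [h0]
  | one => rw [h1, pow_one, pow_one, div_self hrs']
  | more n ih1 ih2 =>
    rw [hrec, ih1, ih2]
    field_simp
    ring

theorem trig_sum_fibonacci (G : ℕ → ℝ) (hG0 : G 0 = 0) (hG1 : G 1 = 1)
    (hGrec : ∀ n : ℕ, G (n + 2) = 4 * G (n + 1) - G n) :
    ∀ n : ℕ, 0 < n →
      ∑ k ∈ Finset.range n, 1 / (1 + 2 * Real.sin ((k : ℝ) * π / (2 * n)) ^ 2)
        = 1 / 3 + (n : ℝ) * G (2 * n) / (6 * (G n) ^ 2) := by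
  intro n hn
  set α : ℝ := 2 + √3
  have hs : √3 ^ 2 = 3 := sq_sqrt (by norm_num)
  have hα : 1 < α := lt_add_of_lt_of_nonneg one_lt_two (sqrt_nonneg 3)
  have hαinv : α⁻¹ = 2 - √3 := inv_eq_of_mul_eq_one_right (by linear_combination -hs)
  have hd : (α - α⁻¹) ^ 2 = 12 := by rw [hαinv]; linear_combination 4 * hs
  have hd0 : α - α⁻¹ ≠ 0 := by intro h; simp [h] at hd
  have hG := eq_pow_sub_pow_div_of_recurrence (sub_ne_zero.mp hd0) hG0 hG1
    (fun m => by rw [hGrec, mul_inv_cancel₀ (by positivity), hαinv]; ring)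
  have hterm : ∀ k ∈ range n,
      1 / (1 + 2 * sin (k * π / (2 * n)) ^ 2) = ((α + α⁻¹) / 2 - cos (k * π / n))⁻¹ :=
    fun k _ => by
      rw [show (α + α⁻¹) / 2 = 2 by rw [hαinv]; ring,
        show (k : ℝ) * π / n = 2 * (k * π / (2 * n)) by field_simp, cos_two_mul_eq_one_sub]
      ring_nf
  rw [sum_congr rfl hterm, sum_range_inv_sub_cos_mul_pi_div hα hn, hG, hG, inv_pow, inv_pow,
    pow_mul']
  have hx : 1 < α ^ n := one_lt_pow₀ hα hn.ne'
  generalize α ^ n = x at hx ⊢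
  generalize α - α⁻¹ = d at hd hd0 ⊢
  have hx0 : x ≠ 0 := by positivity
  have hx1 : x ^ 2 - 1 ≠ 0 := by nlinarith
  field_simp
  linear_combination (-(6 * (x ^ 2 - 1) ^ 2 + 3 * n * d * (x ^ 4 - 1))) * hd
end

section
/- Let G : ℕ → ℝ satisfy G 0 = 0, G 1 = 1 and G (n+2) = 4·G (n+1) - G n for all n ≥ 0. Then for every positive integer n, n³/3 - (n²/√3)·(1 - 2/(1 - (2 - √3)^(2n))) = n³/3 + n²·G (2n)/(6·(G n)²). In particular this common value (the Kirchhoff index of the ladder graph L_n) is a rational number. -/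
/-!
With `α = 2 + √3` and `β = 2 - √3` (the roots of `x² - 4x + 1`, so `αβ = 1`), Binet's formula
gives `G n = (αⁿ - βⁿ) / (2√3)`, hence `G (2n) = G n · (αⁿ + βⁿ)`. Multiplying numerator and
denominator of `1 - 2 / (1 - β²ⁿ)` by `αⁿ`, both sides become
`n³/3 + n² (αⁿ + βⁿ) / (√3 (αⁿ - βⁿ))`. Rationality holds because `G` is integer-valued.
-/

section LucasSequence

variable {R : Type*} (G : ℕ → R)

theorem exists_int_eq_of_rec [Ring R] (p q : ℤ) (h0 : G 0 = 0) (h1 : G 1 = 1)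
    (hrec : ∀ n, G (n + 2) = p * G (n + 1) - q * G n) : ∀ n, ∃ z : ℤ, G n = z := by
  suffices h : ∀ n, (∃ z : ℤ, G n = z) ∧ ∃ z : ℤ, G (n + 1) = z from fun n => (h n).1
  intro n
  induction n with
  | zero => exact ⟨⟨0, by simp [h0]⟩, ⟨1, by simp [h1]⟩⟩
  | succ k ih =>
    obtain ⟨⟨a, ha⟩, ⟨b, hb⟩⟩ := ih
    refine ⟨⟨b, hb⟩, ⟨p * b - q * a, ?_⟩⟩
    rw [hrec, ha, hb, Int.cast_sub, Int.cast_mul, Int.cast_mul]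

theorem mul_sub_eq_pow_sub_pow_of_rec [CommRing R] (α β : R) (h0 : G 0 = 0) (h1 : G 1 = 1)
    (hrec : ∀ n, G (n + 2) = (α + β) * G (n + 1) - α * β * G n) :
    ∀ n, G n * (α - β) = α ^ n - β ^ n := by
  suffices h : ∀ n, G n * (α - β) = α ^ n - β ^ n ∧
      G (n + 1) * (α - β) = α ^ (n + 1) - β ^ (n + 1) from fun n => (h n).1
  intro n
  induction n with
  | zero => constructor <;> simp [h0, h1]
  | succ k ih =>
    refine ⟨ih.2, ?_⟩
    rw [hrec]
    linear_combination (α + β) * ih.2 - α * β * ih.1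

end LucasSequence

theorem one_sub_two_div_one_sub_sq {K : Type*} [Field K] {a b : K} (hab : a * b = 1)
    (hne : a ≠ b) : 1 - 2 / (1 - b ^ 2) = -((a + b) / (a - b)) := by
  have hsub : a - b ≠ 0 := sub_ne_zero.mpr hne
  have hden : 1 - b ^ 2 ≠ 0 := fun h => hsub (by linear_combination a * h + b * hab)
  field_simp
  linear_combination (-2 * b) * hab

theorem kirchhoff_index_fibonacci (G : ℕ → ℝ) (hG0 : G 0 = 0) (hG1 : G 1 = 1)
    (hGrec : ∀ n : ℕ, G (n + 2) = 4 * G (n + 1) - G n) :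
    ∀ n : ℕ, 0 < n →
      ((n : ℝ) ^ 3 / 3 - ((n : ℝ) ^ 2 / Real.sqrt 3) *
            (1 - 2 / (1 - (2 - Real.sqrt 3) ^ (2 * n)))
          = (n : ℝ) ^ 3 / 3 + (n : ℝ) ^ 2 * G (2 * n) / (6 * (G n) ^ 2)) ∧
      ∃ q : ℚ, (n : ℝ) ^ 3 / 3 + (n : ℝ) ^ 2 * G (2 * n) / (6 * (G n) ^ 2) = (q : ℝ) := by
  intro n hn
  set s := Real.sqrt 3
  have hs : s ^ 2 = 3 := Real.sq_sqrt (by norm_num)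
  have hs0 : 0 < s := by positivity
  have hβ : 0 ≤ 2 - s := by nlinarith [Real.sqrt_nonneg 3]
  have hbinet := mul_sub_eq_pow_sub_pow_of_rec G (2 + s) (2 - s) hG0 hG1 fun k => by
    rw [hGrec]; linear_combination -G k * hs
  set a := (2 + s) ^ n
  set b := (2 - s) ^ n
  have hab : a * b = 1 := by
    rw [← mul_pow, show (2 + s) * (2 - s) = 1 by linear_combination -hs, one_pow]
  have hba : b < a := pow_lt_pow_left₀ (by linarith) hβ hn.ne'
  have hGn : G n = (a - b) / (2 * s) := by
    rw [eq_div_iff (by positivity)]; linear_combination hbinet n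
  have hG2n : G (2 * n) = (a ^ 2 - b ^ 2) / (2 * s) := by
    rw [eq_div_iff (by positivity), ← pow_mul', ← pow_mul']; linear_combination hbinet (2 * n)
  refine ⟨?_, ?_⟩
  · rw [pow_mul', one_sub_two_div_one_sub_sq hab hba.ne', hG2n, hGn]
    clear_value a b -- otherwise `field_simp` unfolds `a` and `b`
    have hsub : a - b ≠ 0 := sub_ne_zero.mpr hba.ne'
    field_simp
    linear_combination -6 * (a ^ 2 - b ^ 2) * hs
  · have hint := exists_int_eq_of_rec G 4 1 hG0 hG1 (by simpa using hGrec)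
    obtain ⟨z, hz⟩ := hint n
    obtain ⟨w, hw⟩ := hint (2 * n)
    exact ⟨(n : ℚ) ^ 3 / 3 + (n : ℚ) ^ 2 * w / (6 * z ^ 2), by rw [hz, hw]; push_cast; ring⟩
end

section
/- Let G : ℕ → ℝ satisfy G 0 = 0, G 1 = 1 and G (n+2) = 4·G (n+1) - G n for all n ≥ 0. Then for every n ≥ 1: -2√3/((2 + √3)^n - (2 - √3)^n) = -1/(G n); -1 - √3 + 2√3/(1 - (2 - √3)^(2n)) = -1 + G (2n)/(2·(G n)²); (n - 2 - √3)/2 + √3/(1 + (2 - √3)^n) = (n - 2)/2 + (G (2n) - 2·G n)/(4·(G n)²); and (n - 2 - √3)/2 + √3/(1 - (2 - √3)^n) = (n - 2)/2 + 3·(G n)²/(G (2n) - 2·G n). -/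
/-! With α = 2 + √3 and β = 2 − √3 = α⁻¹, Binet's formula gives 2√3 · G n = αⁿ − βⁿ and hence
G (2n) = G n · (αⁿ + βⁿ). In terms of b = βⁿ ∈ (0, 1) every quantity in the four identities is a
rational function of b and √3, and the identities reduce to ring identities modulo √3² = 3. -/

section LucasSequence

variable {R : Type*} {α β : R} {G : ℕ → R}

theorem sub_mul_lucas_eq_pow_sub_pow [CommRing R] (hG0 : G 0 = 0) (hG1 : G 1 = 1)
    (hGrec : ∀ n, G (n + 2) = (α + β) * G (n + 1) - α * β * G n) (n : ℕ) :
    (α - β) * G n = α ^ n - β ^ n := by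
  induction n using Nat.twoStepInduction with
  | zero => simp [hG0]
  | one => simp [hG1]
  | more n ih₀ ih₁ =>
    rw [hGrec]
    linear_combination (α + β) * ih₁ - α * β * ih₀

theorem lucas_two_mul [Field R] (hαβ : α ≠ β) (hG0 : G 0 = 0) (hG1 : G 1 = 1)
    (hGrec : ∀ n, G (n + 2) = (α + β) * G (n + 1) - α * β * G n) (n : ℕ) :
    G (2 * n) = G n * (α ^ n + β ^ n) := by
  apply mul_left_cancel₀ (sub_ne_zero.2 hαβ)
  linear_combination sub_mul_lucas_eq_pow_sub_pow hG0 hG1 hGrec (2 * n) -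
    (α ^ n + β ^ n) * sub_mul_lucas_eq_pow_sub_pow hG0 hG1 hGrec n

end LucasSequence

theorem ladder_resistance_identities {s b g : ℝ} (x : ℝ) (hs : s ^ 2 = 3) (hb0 : 0 < b)
    (hb1 : b < 1) (hg : g = (b⁻¹ - b) / (2 * s)) :
    (-2 * s / (b⁻¹ - b) = -1 / g) ∧
    (-1 - s + 2 * s / (1 - b ^ 2) = -1 + g * (b⁻¹ + b) / (2 * g ^ 2)) ∧
    ((x - 2 - s) / 2 + s / (1 + b) = (x - 2) / 2 + (g * (b⁻¹ + b) - 2 * g) / (4 * g ^ 2)) ∧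
    ((x - 2 - s) / 2 + s / (1 - b) = (x - 2) / 2 + 3 * g ^ 2 / (g * (b⁻¹ + b) - 2 * g)) := by
  have hs0 : s ≠ 0 := by rintro rfl; norm_num at hs
  have hb : b ≠ 0 := hb0.ne'
  have hb_sub : 1 - b ≠ 0 := by linarith
  have hb_add : 1 + b ≠ 0 := by linarith
  have hb_sq : 1 - b ^ 2 ≠ 0 := by nlinarith
  have hdiff : g * (b⁻¹ + b) - 2 * g = (1 - b) ^ 3 * (1 + b) / (2 * s * b ^ 2) := by
    rw [hg]; field_simp; ring
  refine ⟨?_, ?_, ?_, ?_⟩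
  · rw [hg]; field_simp
  · rw [hg]; field_simp; ring
  · rw [hdiff, hg]; field_simp; ring
  · rw [hdiff, hg, ← hs]; field_simp; ring

theorem resistances_in_fibonacci_form (G : ℕ → ℝ) (hG0 : G 0 = 0) (hG1 : G 1 = 1)
    (hGrec : ∀ n : ℕ, G (n + 2) = 4 * G (n + 1) - G n) :
    ∀ n : ℕ, 1 ≤ n →
      (-2 * Real.sqrt 3 / ((2 + Real.sqrt 3) ^ n - (2 - Real.sqrt 3) ^ n) = -1 / G n) ∧
      (-1 - Real.sqrt 3 + 2 * Real.sqrt 3 / (1 - (2 - Real.sqrt 3) ^ (2 * n))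
          = -1 + G (2 * n) / (2 * (G n) ^ 2)) ∧
      (((n : ℝ) - 2 - Real.sqrt 3) / 2 + Real.sqrt 3 / (1 + (2 - Real.sqrt 3) ^ n)
          = ((n : ℝ) - 2) / 2 + (G (2 * n) - 2 * G n) / (4 * (G n) ^ 2)) ∧
      (((n : ℝ) - 2 - Real.sqrt 3) / 2 + Real.sqrt 3 / (1 - (2 - Real.sqrt 3) ^ n)
          = ((n : ℝ) - 2) / 2 + 3 * (G n) ^ 2 / (G (2 * n) - 2 * G n)) := by
  intro n hn
  set s := Real.sqrt 3
  have hs : s ^ 2 = 3 := Real.sq_sqrt (by norm_num)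
  have hs0 : 0 ≤ s := Real.sqrt_nonneg 3
  have hβ0 : 0 < 2 - s := by nlinarith
  have hβ1 : 2 - s < 1 := by nlinarith
  have hαβ : (2 + s) * (2 - s) = 1 := by linear_combination -hs
  have hrec : ∀ k, G (k + 2) = (2 + s + (2 - s)) * G (k + 1) - (2 + s) * (2 - s) * G k := by
    intro k; rw [hGrec, hαβ]; ring
  set b := (2 - s) ^ n
  have hα : (2 + s) ^ n = b⁻¹ := by rw [← inv_pow, eq_inv_of_mul_eq_one_left hαβ]
  have hGn : G n = (b⁻¹ - b) / (2 * s) := by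
    rw [eq_div_iff (by positivity), mul_comm, ← hα]
    linear_combination sub_mul_lucas_eq_pow_sub_pow hG0 hG1 hrec n
  rw [lucas_two_mul (by linarith) hG0 hG1 hrec, hα, pow_mul']
  exact ladder_resistance_identities n hs (pow_pos hβ0 n) (pow_lt_one₀ hβ0.le hβ1 (by omega)) hGn
end
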